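/- For all integers n, k ≥ 0: (i) ∂^n(b_1^k) equals the image of the partial k-Bell polynomial B^k_{n+k,k} under the ℚ-algebra homomorphism R → R sending a_i ↦ b_i and b_i ↦ b_i; and (ii) binom(n+k, n) · ∂^n(b_1^k) equals the sum, over all set partitions of {1,…,n+k} into k nonempty blocks, of ∏_{blocks B} |B|·b_{|B|} (i.e. it equals the classical partial Bell polynomial B_{n+k,k} evaluated at the variables b_1, 2b_2, 3b_3, …). -/

import Mathlib

noncomputable section

/-- `R = ℚ[a_1,a_2,…;b_1,b_2,…]`, realized as the polynomial ring over `ℚ` with variables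
`X (true, i) = a_i` and `X (false, i) = b_i`. -/
abbrev RR : Type := MvPolynomial (Bool × ℕ) ℚ

/-- the variable `a_i` -/
def va (i : ℕ) : RR := MvPolynomial.X (true, i)
/-- the variable `b_i` -/
def vb (i : ℕ) : RR := MvPolynomial.X (false, i)

/-- the derivation `∂` of `R` with `∂ a_i = a_{i+1}` and `∂ b_i = b_{i+1}` -/
def del : RR → RR :=
  fun p => MvPolynomial.mkDerivation ℚ (fun s : Bool × ℕ => MvPolynomial.X (s.1, s.2 + 1)) p

/-- coefficientwise extension of a map on coefficients to `A[t]` (i.e. `∂` with `∂ t = 0`) -/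
def polyLift {A : Type*} [Semiring A] (D : A → A) (p : Polynomial A) : Polynomial A :=
  p.sum fun i c => Polynomial.C (D c) * Polynomial.X ^ i

/-- the map `E : R[t] → R[t]`, `E(p) = t·b_1·p + ∂(p)` -/
def EOp (p : Polynomial RR) : Polynomial RR :=
  Polynomial.C (vb 1) * Polynomial.X * p + polyLift del p

/-- the partial `r`-Bell polynomial `B^r_{n+r,k+r}`: the coefficient of `t^k` in `E^n(a_1^r)` -/
def rBell (n k r : ℕ) : RR := (EOp^[n] (Polynomial.C (va 1 ^ r))).coeff k

/-- Exponential of a formal multivariate power series (intended for series with zero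
constant term): `exp(u) = ∑_{j≥0} u^j/j!`; for a series `u` of positive order only the
terms with `j ≤ |d|` contribute to the coefficient of a monomial of total degree `|d|`. -/
def sexp {σ : Type*} {A : Type*} [Ring A] [Algebra ℚ A] (u : MvPowerSeries σ A) :
    MvPowerSeries σ A :=
  fun d => MvPowerSeries.coeff d
    (∑ j ∈ Finset.range (d.sum (fun _ m => m) + 1), (j.factorial : ℚ)⁻¹ • u ^ j)

/-- the `ℚ`-algebra endomorphism of `R` sending `a_i ↦ b_i` and `b_i ↦ b_i` -/
def tauMap : RR →ₐ[ℚ] RR :=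
  MvPolynomial.aeval (fun s : Bool × ℕ => MvPolynomial.X (false, s.2))

/-- `IsBSP N k r π` : `π` is a bicolored set partition of `{0,…,N-1}` (representing
`{1,…,N}`) into `k + r` pairwise disjoint nonempty blocks, each block carrying a color
(`true` = color 1, `false` = color 2), such that the blocks colored 1 are exactly the
blocks containing one of the first `r` elements and the first `r` elements lie in `r`
distinct blocks.  For `r = 0` all blocks are forced to be colored `false`, so
`IsBSP N k 0` describes exactly the (plain) set partitions of `{1,…,N}` into `k`
nonempty blocks. -/
def IsBSP (N k r : ℕ) (π : Finset (Finset (Fin N) × Bool)) : Prop :=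
  π.card = k + r ∧
  (∀ p ∈ π, p.1.Nonempty) ∧
  (∀ p ∈ π, ∀ q ∈ π, p ≠ q → Disjoint p.1 q.1) ∧
  (∀ x : Fin N, ∃ p ∈ π, x ∈ p.1) ∧
  (∀ p ∈ π, (p.2 = true ↔ ∃ i ∈ p.1, (i : ℕ) < r)) ∧
  (∀ p ∈ π, ∀ i ∈ p.1, ∀ j ∈ p.1, (i : ℕ) < r → (j : ℕ) < r → i = j)

set_option synthInstance.maxSize 2000 in
instance (N k r : ℕ) : DecidablePred (IsBSP N k r) := fun π => by
  unfold IsBSP; infer_instance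

/-!
(i) `E` multiplies by `t` except in its `∂`-part, so the constant term of `E^n(c)` is `∂^n c`;
and `τ` commutes with `∂`.

(ii) The general Leibniz rule writes `∂^n(b_1^k)` as `∑_{f : [n] → [k]} ∏_j b_{1+|f⁻¹ j|}`.
Since `k!·C(n+k,n) = (n+k)_k` counts the injections `ι : [k] → [n+k]`, multiplying by it gives
the sum over pairs `(h, ι)` of a map `h : [n+k] → [k]` and a section `ι` of `h`: for fixed `ι`,
such `h` are words on the `n` points outside the image of `ι`, with fibres one larger.
Counting the `∏_j |h⁻¹ j|` sections of each `h` and grouping the surjections `h` by their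
fibres, each partition into `k` blocks arises from exactly `k!` labellings `h`.
-/

open Finset

namespace Derivation

variable {R A : Type*} [CommSemiring R] [CommSemiring A] [Algebra R A] (D : Derivation R A A)

theorem leibniz_finset_prod {ι : Type*} [DecidableEq ι] (s : Finset ι) (x : ι → A) :
    D (∏ i ∈ s, x i) = ∑ i ∈ s, ∏ j ∈ s, Function.update x i (D (x i)) j := by
  induction s using Finset.induction_on with
  | empty => simp
  | insert a s ha ih =>
    have hnew : ∏ j ∈ s, Function.update x a (D (x a)) j = ∏ j ∈ s, x j :=
      prod_congr rfl fun j hj => Function.update_of_ne (ne_of_mem_of_not_mem hj ha) _ _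
    have hold : ∀ i ∈ s, ∏ j ∈ insert a s, Function.update x i (D (x i)) j =
        x a * ∏ j ∈ s, Function.update x i (D (x i)) j := fun i hi => by
      rw [prod_insert ha, Function.update_of_ne (ne_of_mem_of_not_mem hi ha).symm]
    rw [prod_insert ha, leibniz, ih, sum_insert ha, prod_insert ha, Function.update_self, hnew,
      sum_congr rfl hold, ← mul_sum, smul_eq_mul, smul_eq_mul, add_comm, mul_comm]

theorem iterate_leibniz_prod {ι : Type*} [Fintype ι] [DecidableEq ι] (n : ℕ) (x : ι → A) :
    (⇑D)^[n] (∏ i, x i) = ∑ f : Fin n → ι, ∏ i, (⇑D)^[#{m | f m = i}] (x i) := by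
  induction n generalizing x with
  | zero => simp
  | succ n ih =>
    have hcount (i : ι) (f : Fin n → ι) (j : ι) :
        #{m | (Fin.cons i f : Fin (n + 1) → ι) m = j} =
          #{m | f m = j} + if i = j then 1 else 0 := by
      rw [Fin.card_filter_univ_succ', add_comm]
      simp
    have hstep (i : ι) (c : ℕ) (j : ι) :
        (⇑D)^[c] (Function.update x i (D (x i)) j) = (⇑D)^[c + if i = j then 1 else 0] (x j) := by
      by_cases hij : i = j
      · subst hij; simp [Function.iterate_succ_apply]
      · simp [hij, Function.update_of_ne (Ne.symm hij)]
    have hsum := map_sum ((D : A →ₗ[R] A) ^ n)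
      (fun i => ∏ j, Function.update x i (D (x i)) j) univ
    rw [Module.End.coe_pow, coeFn_coe] at hsum
    rw [Function.iterate_succ_apply, leibniz_finset_prod, hsum]
    simp only [ih, hstep, ← hcount]
    rw [← (Fin.consEquiv fun _ => ι).sum_comp, Fintype.sum_prod_type]
    rfl

end Derivation

theorem coeff_polyLift {A : Type*} [Semiring A] {D : A → A} (hD : D 0 = 0) (p : Polynomial A)
    (i : ℕ) : (polyLift D p).coeff i = D (p.coeff i) := by
  simp only [polyLift, Polynomial.sum, Polynomial.finsetSum_coeff, Polynomial.coeff_C_mul_X_pow]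
  rw [sum_eq_single i (fun j _ hji => if_neg hji.symm) (fun hi => ?_), if_pos rfl]
  rw [Polynomial.notMem_support_iff.mp hi, hD, ite_self]

section Sections

variable {A : Type*} [CommSemiring A] (w : ℕ → A)

theorem card_sections {α κ : Type*} [Fintype α] [Fintype κ] [DecidableEq κ]
    (h : α → κ) : #{ι : κ → α | ∀ j, h (ι j) = j} = ∏ j, #{x | h x = j} := by
  rw [← Fintype.card_piFinset]
  congr 1
  ext ι
  simp [Fintype.mem_piFinset]

theorem card_fiber_comp_perm {α κ : Type*} [Fintype α] [DecidableEq κ] (h : α → κ)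
    (σ : Equiv.Perm α) (j : κ) : #{x | h (σ x) = j} = #{x | h x = j} := by
  simp only [card_filter]
  exact Equiv.sum_comp σ fun x => if h x = j then 1 else 0

theorem card_fiber_append_id {n k : ℕ} (f : Fin n → Fin k) (j : Fin k) :
    #{x | Fin.append f id x = j} = 1 + #{m | f m = j} := by
  rw [card_filter, card_filter, Fin.sum_univ_add]
  simp [add_comm]

theorem sum_sections_natAdd (n k : ℕ) :
    ∑ h ∈ {h : Fin (n + k) → Fin k | ∀ j, h (Fin.natAdd n j) = j}, ∏ j, w #{x | h x = j} =
      ∑ f : Fin n → Fin k, ∏ j, w (1 + #{m | f m = j}) := by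
  symm
  refine sum_nbij' (fun f => Fin.append f id) (fun h => h ∘ Fin.castAdd k) ?_ ?_ ?_ ?_ ?_
  · simp [Fin.append_right]
  · simp
  · intro f _
    funext i
    simp [Fin.append_left]
  · intro h hh
    replace hh := (mem_filter.mp hh).2
    conv_rhs => rw [← Fin.append_castAdd_natAdd (f := h)]
    congr 1
    funext j
    exact (hh j).symm
  · intro f _
    simp only [card_fiber_append_id]

theorem sum_sections_of_injective {n k : ℕ} {ι : Fin k → Fin (n + k)}
    (hι : Function.Injective ι) :
    ∑ h ∈ {h : Fin (n + k) → Fin k | ∀ j, h (ι j) = j}, ∏ j, w #{x | h x = j} =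
      ∑ f : Fin n → Fin k, ∏ j, w (1 + #{m | f m = j}) := by
  obtain ⟨σ, hσ⟩ := Equiv.Perm.exists_extending_pair _ _ (Fin.natAdd_injective k n) hι
  rw [← sum_sections_natAdd]
  refine sum_nbij' (· ∘ σ) (· ∘ σ.symm) ?_ ?_ ?_ ?_ ?_
  · simp [hσ]
  · intro h hh
    simp only [mem_filter, mem_univ, true_and] at hh ⊢
    intro j
    rw [Function.comp_apply, ← hσ, Equiv.symm_apply_apply, hh]
  · intro h _
    simp [Function.comp_assoc]
  · intro h _
    simp [Function.comp_assoc]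
  · intro h _
    simp only [Function.comp_apply, card_fiber_comp_perm]

theorem sum_prod_card_fiber_mul_eq_descFactorial_smul (n k : ℕ) :
    ∑ h : Fin (n + k) → Fin k, ∏ j, (#{x | h x = j} * w #{x | h x = j}) =
      (n + k).descFactorial k • ∑ f : Fin n → Fin k, ∏ j, w (1 + #{m | f m = j}) := by
  have hinj : #{ι : Fin k → Fin (n + k) | Function.Injective ι} = (n + k).descFactorial k := by
    rw [← Fintype.card_subtype, Fintype.card_congr (Equiv.subtypeInjectiveEquivEmbedding _ _),
      Fintype.card_embedding_eq, Fintype.card_fin, Fintype.card_fin]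
  calc ∑ h : Fin (n + k) → Fin k, ∏ j, (#{x | h x = j} * w #{x | h x = j})
      = ∑ h : Fin (n + k) → Fin k, ∑ ι ∈ {ι : Fin k → Fin (n + k) | ∀ j, h (ι j) = j},
          ∏ j, w #{x | h x = j} := by
        refine sum_congr rfl fun h _ => ?_
        rw [prod_mul_distrib, sum_const, nsmul_eq_mul, ← Nat.cast_prod, ← card_sections]
        congr -- the two filters differ only in their `Decidable` instances
    _ = ∑ ι : Fin k → Fin (n + k), ∑ h ∈ {h : Fin (n + k) → Fin k | ∀ j, h (ι j) = j},
          ∏ j, w #{x | h x = j} := sum_comm' (by simp)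
    _ = ∑ ι ∈ {ι : Fin k → Fin (n + k) | Function.Injective ι},
          ∑ f : Fin n → Fin k, ∏ j, w (1 + #{m | f m = j}) := by
        rw [← sum_filter_of_ne (p := Function.Injective) fun ι _ hne => ?_]
        · exact sum_congr rfl fun ι hι => sum_sections_of_injective w (mem_filter.mp hι).2
        · obtain ⟨h, hh, -⟩ := exists_ne_zero_of_sum_ne_zero hne
          exact Function.LeftInverse.injective (mem_filter.mp hh).2
    _ = _ := by rw [sum_const, hinj]

end Sections

section Partitions

variable {N k r : ℕ}

def fiberPartition (h : Fin N → Fin k) : Finset (Finset (Fin N) × Bool) :=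
  univ.image fun j => (({x | h x = j} : Finset (Fin N)), false)

theorem injective_fiber {h : Fin N → Fin k} (hh : Function.Surjective h) :
    Function.Injective fun j => (({x | h x = j} : Finset (Fin N)), false) := by
  intro j₁ j₂ hj
  obtain ⟨x, rfl⟩ := hh j₁
  have hx : x ∈ ({y | h y = h x} : Finset (Fin N)) := by simp
  simp only [Prod.mk.injEq, and_true] at hj
  rw [hj, mem_filter] at hx
  exact hx.2

theorem isBSP_fiberPartition {h : Fin N → Fin k} (hh : Function.Surjective h) :
    IsBSP N k 0 (fiberPartition h) := by
  refine ⟨?_, ?_, ?_, fun x => ⟨_, mem_image_of_mem _ (mem_univ (h x)), by simp⟩, ?_, ?_⟩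
  · rw [fiberPartition, card_image_of_injective _ (injective_fiber hh), card_univ,
      Fintype.card_fin, add_zero]
  · rintro _ hp
    obtain ⟨j, -, rfl⟩ := mem_image.mp hp
    obtain ⟨x, rfl⟩ := hh j
    exact ⟨x, by simp⟩
  · rintro _ hp _ hq hne
    obtain ⟨j₁, -, rfl⟩ := mem_image.mp hp
    obtain ⟨j₂, -, rfl⟩ := mem_image.mp hq
    exact disjoint_filter.mpr fun x _ hx₁ hx₂ => hne (by rw [← hx₁, ← hx₂])
  · rintro _ hp
    obtain ⟨j, -, rfl⟩ := mem_image.mp hp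
    simp
  · rintro _ _ i - j - hi
    exact absurd hi (Nat.not_lt_zero _)

variable {π : Finset (Finset (Fin N) × Bool)}

theorem IsBSP.existsUnique_mem (hπ : IsBSP N k r π) (x : Fin N) : ∃! p, p ∈ π ∧ x ∈ p.1 := by
  obtain ⟨p, hp, hxp⟩ := hπ.2.2.2.1 x
  refine ⟨p, ⟨hp, hxp⟩, fun q ⟨hq, hxq⟩ => ?_⟩
  by_contra hne
  exact disjoint_left.mp (hπ.2.2.1 q hq p hp hne) hxq hxp

theorem IsBSP.snd_eq_false (hπ : IsBSP N k 0 π) {p : Finset (Fin N) × Bool} (hp : p ∈ π) :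
    p.2 = false := by
  by_contra hne
  obtain ⟨i, -, hi⟩ := (hπ.2.2.2.2.1 p hp).mp (Bool.not_eq_false _ ▸ hne)
  exact Nat.not_lt_zero _ hi

def IsBSP.label (hπ : IsBSP N k 0 π) (e : Fin k ≃ π) (x : Fin N) : Fin k :=
  e.symm ⟨π.choose (fun p => x ∈ p.1) (hπ.existsUnique_mem x), choose_mem _ _ _⟩

theorem IsBSP.label_eq_iff (hπ : IsBSP N k 0 π) (e : Fin k ≃ π) (x : Fin N) (j : Fin k) :
    hπ.label e x = j ↔ x ∈ (e j).1.1 := by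
  rw [IsBSP.label, Equiv.symm_apply_eq, ← Subtype.coe_inj]
  have hchoose := choose_property (fun p => x ∈ p.1) π (hπ.existsUnique_mem x)
  exact ⟨fun hj => hj ▸ hchoose,
    fun hx => (hπ.existsUnique_mem x).unique ⟨choose_mem _ _ _, hchoose⟩ ⟨(e j).2, hx⟩⟩

theorem IsBSP.fiber_label (hπ : IsBSP N k 0 π) (e : Fin k ≃ π) (j : Fin k) :
    (({x | hπ.label e x = j} : Finset (Fin N)), false) = (e j).1 := by
  refine Prod.ext ?_ (hπ.snd_eq_false (e j).2).symm
  ext x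
  simp [hπ.label_eq_iff]

theorem IsBSP.label_surjective (hπ : IsBSP N k 0 π) (e : Fin k ≃ π) :
    Function.Surjective (hπ.label e) := fun j =>
  (hπ.2.1 _ (e j).2).imp fun x hx => (hπ.label_eq_iff e x j).mpr hx

theorem IsBSP.fiberPartition_label (hπ : IsBSP N k 0 π) (e : Fin k ≃ π) :
    fiberPartition (hπ.label e) = π := by
  ext p
  simp only [fiberPartition, mem_image, mem_univ, true_and, hπ.fiber_label]
  exact ⟨fun ⟨j, hj⟩ => hj ▸ (e j).2, fun hp => ⟨e.symm ⟨p, hp⟩, by simp⟩⟩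

def IsBSP.labelingEquiv (hπ : IsBSP N k 0 π) :
    {h : Fin N → Fin k // Function.Surjective h ∧ fiberPartition h = π} ≃ (Fin k ≃ π) where
  toFun h := Equiv.ofBijective
    (fun j => ⟨(({x | h.1 x = j} : Finset (Fin N)), false), by
      have hmem : (_, false) ∈ fiberPartition h.1 := mem_image_of_mem _ (mem_univ j)
      rwa [h.2.2] at hmem⟩)
    ⟨fun _ _ hj => injective_fiber h.2.1 (congrArg Subtype.val hj), fun p => by
      have hp : p.1 ∈ fiberPartition h.1 := by rw [h.2.2]; exact p.2
      obtain ⟨j, -, hj⟩ := mem_image.mp hp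
      exact ⟨j, Subtype.ext hj⟩⟩
  invFun e := ⟨hπ.label e, hπ.label_surjective e, hπ.fiberPartition_label e⟩
  left_inv h := Subtype.ext <| funext fun x => (hπ.label_eq_iff _ x _).mpr
    (show x ∈ ({y | h.1 y = h.1 x} : Finset (Fin N)) by simp)
  right_inv e := by
    ext j : 2
    exact hπ.fiber_label e j

theorem IsBSP.card_labelings (hπ : IsBSP N k 0 π) :
    #{h : Fin N → Fin k | Function.Surjective h ∧ fiberPartition h = π} = k.factorial := by
  rw [← Fintype.card_subtype, Fintype.card_congr hπ.labelingEquiv, Fintype.card_equiv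
    (Fintype.equivFinOfCardEq (by rw [Fintype.card_coe, hπ.1, add_zero])).symm, Fintype.card_fin]

theorem sum_prod_fiber_eq_factorial_smul_sum_isBSP {A : Type*} [CommSemiring A]
    (v : Finset (Fin N) → A) (hv : v ∅ = 0) :
    ∑ h : Fin N → Fin k, ∏ j, v {x | h x = j} =
      k.factorial • ∑ π with IsBSP N k 0 π, ∏ p ∈ π, v p.1 := by
  have hsurj : ∑ h : Fin N → Fin k with Function.Surjective h, ∏ j, v {x | h x = j} =
      ∑ h : Fin N → Fin k, ∏ j, v {x | h x = j} := by
    refine sum_filter_of_ne fun h _ hne j => ?_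
    by_contra hj
    refine hne (prod_eq_zero (mem_univ j) ?_)
    rw [filter_eq_empty_iff.mpr fun x _ hx => hj ⟨x, hx⟩, hv]
  rw [← hsurj, ← sum_fiberwise_of_maps_to (g := fiberPartition) (t := {π | IsBSP N k 0 π})
    fun h hh => mem_filter.mpr ⟨mem_univ _, isBSP_fiberPartition (mem_filter.mp hh).2⟩, smul_sum]
  refine sum_congr rfl fun π hπ => ?_
  replace hπ := (mem_filter.mp hπ).2
  rw [filter_filter, ← hπ.card_labelings, ← sum_const]
  refine sum_congr rfl fun h hh => ?_
  obtain ⟨-, hsurj, rfl⟩ := mem_filter.mp hh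
  rw [fiberPartition, prod_image fun j _ j' _ hj => injective_fiber hsurj hj]

end Partitions

def delDerivation : Derivation ℚ RR RR :=
  MvPolynomial.mkDerivation ℚ fun s : Bool × ℕ => MvPolynomial.X (s.1, s.2 + 1)

theorem coe_delDerivation : ⇑delDerivation = del := rfl

theorem del_X (s : Bool × ℕ) : del (MvPolynomial.X s) = MvPolynomial.X (s.1, s.2 + 1) :=
  MvPolynomial.mkDerivation_X ℚ _ s

theorem iterate_del_vb (i m : ℕ) : del^[m] (vb i) = vb (i + m) := by
  induction m with
  | zero => rfl
  | succ m ih => rw [Function.iterate_succ_apply', ih]; exact del_X _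

theorem coeff_zero_EOp (p : Polynomial RR) : (EOp p).coeff 0 = del (p.coeff 0) := by
  rw [EOp, Polynomial.coeff_add, coeff_polyLift (D := del) (map_zero delDerivation), mul_assoc,
    Polynomial.coeff_C_mul, Polynomial.coeff_X_mul_zero, mul_zero, zero_add]

theorem coeff_zero_iterate_EOp_C (n : ℕ) (c : RR) :
    (EOp^[n] (Polynomial.C c)).coeff 0 = del^[n] c := by
  induction n with
  | zero => simp
  | succ n ih => rw [Function.iterate_succ_apply', Function.iterate_succ_apply', coeff_zero_EOp, ih]

theorem tauMap_del (p : RR) : tauMap (del p) = del (tauMap p) := by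
  rw [← coe_delDerivation]
  induction p using MvPolynomial.induction_on with
  | C q => simp [tauMap]
  | add p q hp hq => simp only [map_add, hp, hq]
  | mul_X p s hp =>
    simp only [Derivation.leibniz, map_add, map_mul, smul_eq_mul, hp]
    simp only [coe_delDerivation, del_X, tauMap, MvPolynomial.aeval_X]

theorem tauMap_iterate_del (n : ℕ) (p : RR) : tauMap (del^[n] p) = del^[n] (tauMap p) :=
  Function.Semiconj.iterate_right tauMap_del n p

theorem iterate_del_vb_one_pow_eq_tauMap_rBell (n k : ℕ) :
    del^[n] (vb 1 ^ k) = tauMap (rBell n 0 k) := by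
  rw [rBell, coeff_zero_iterate_EOp_C, tauMap_iterate_del, map_pow, va, tauMap,
    MvPolynomial.aeval_X]
  rfl

theorem iterate_del_vb_one_pow (n k : ℕ) :
    del^[n] (vb 1 ^ k) = ∑ f : Fin n → Fin k, ∏ j, vb (1 + #{m | f m = j}) := by
  rw [← Fin.prod_const, ← coe_delDerivation, Derivation.iterate_leibniz_prod]
  simp only [coe_delDerivation, iterate_del_vb]

/-- For all `n, k ≥ 0`:
(i) `∂^n(b_1^k)` is the image of the partial `k`-Bell polynomial `B^k_{n+k,k}` under the
`ℚ`-algebra homomorphism `R → R` with `a_i ↦ b_i`, `b_i ↦ b_i`; and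
(ii) `binom(n+k,n)·∂^n(b_1^k)` is the sum, over all set partitions of `{1,…,n+k}` into
`k` nonempty blocks, of `∏_{blocks B} |B|·b_{|B|}` (the classical partial Bell polynomial
`B_{n+k,k}` evaluated at `b_1, 2b_2, 3b_3, …`). -/
theorem stmt9 (n k : ℕ) :
    del^[n] (vb 1 ^ k) = tauMap (rBell n 0 k) ∧
    (((n + k).choose n : ℕ) : RR) * del^[n] (vb 1 ^ k) =
      ∑ π ∈ Finset.univ.filter
          (fun π : Finset (Finset (Fin (n + k)) × Bool) => IsBSP (n + k) k 0 π),
        ∏ p ∈ π, ((p.1.card : RR) * vb p.1.card) := by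
  refine ⟨iterate_del_vb_one_pow_eq_tauMap_rBell n k, ?_⟩
  have hcount : k.factorial * (n + k).choose n = (n + k).descFactorial k := by
    rw [Nat.descFactorial_eq_factorial_mul_choose, Nat.choose_symm_add]
  have hpartitions := sum_prod_fiber_eq_factorial_smul_sum_isBSP (N := n + k) (k := k)
    (fun B => (#B : RR) * vb #B) (by simp)
  apply mul_left_cancel₀ (Nat.cast_ne_zero.mpr k.factorial_ne_zero : (k.factorial : RR) ≠ 0)
  rw [← nsmul_eq_mul k.factorial (∑ π ∈ _, _), ← hpartitions,
    sum_prod_card_fiber_mul_eq_descFactorial_smul, iterate_del_vb_one_pow, ← mul_assoc,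
    ← Nat.cast_mul, hcount, nsmul_eq_mul]
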